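/- arXiv:2410.19122 — 3 statements merged into one kernel-verified Lean document; each statement's English description precedes it below -/
import Mathlib

section
/- Let Ω ⊂ ℝ^d be a bounded open set, let A : Ω → (d×d symmetric matrices) be measurable and uniformly elliptic with constant β > 0, i.e. ξᵀA(x)ξ ≥ β|ξ|² for all ξ ∈ ℝ^d and almost every x ∈ Ω, and let c : Ω → ℝ be measurable and essentially bounded below with γ := ess inf_{x∈Ω} c(x) (possibly negative). Then for every constant G ≥ β − γ and every continuously differentiable function u on Ω with u and its gradient ∇u square-integrable over Ω, one has ∫_Ω ∇u(x)·A(x)∇u(x) dx + ∫_Ω c(x) u(x)² dx ≥ β ( ∫_Ω |∇u(x)|² dx + ∫_Ω u(x)² dx ) − G ∫_Ω u(x)² dx. -/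
/-!
A uniform pointwise bound `β |ξ|² ≤ ξ·A(x)ξ` integrates to `β ∫|∇u|² ≤ ∫ ∇u·A∇u`, and `γ ≤ c`
integrates to `γ ∫u² ≤ ∫ c u²`; since `β - G ≤ γ` and `∫u² ≥ 0`, adding the two gives the claim.
The one subtle point is that ellipticity is assumed a.e. for each fixed `ξ`, with a null set
depending on `ξ`; it holds a.e. for all `ξ` at once by checking it on a countable dense set.
-/

open MeasureTheory Matrix

/-- The vector of partial derivatives (the gradient) of `f : ℝ^d → ℝ`. -/
noncomputable def pgrad {d : ℕ} (f : (Fin d → ℝ) → ℝ) (x : Fin d → ℝ) : Fin d → ℝ :=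
  fun i => fderiv ℝ f x (Pi.single i 1)

theorem ae_forall_of_isClosed_setOf {α E : Type*} [MeasurableSpace α] {μ : Measure α}
    [TopologicalSpace E] [TopologicalSpace.SeparableSpace E] {p : α → E → Prop}
    (hclosed : ∀ x, IsClosed {ξ | p x ξ}) (h : ∀ ξ, ∀ᵐ x ∂μ, p x ξ) :
    ∀ᵐ x ∂μ, ∀ ξ, p x ξ := by
  obtain ⟨S, hS_countable, hS_dense⟩ := TopologicalSpace.exists_countable_dense E
  filter_upwards [(ae_ball_iff hS_countable).mpr fun ξ _ => h ξ] with x hx ξ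
  exact (hclosed x).closure_subset_iff.mpr (fun η hη => hx η hη) (hS_dense ξ)

theorem isClosed_setOf_mul_dotProduct_self_le {n : Type*} [Fintype n] (β : ℝ)
    (M : Matrix n n ℝ) : IsClosed {ξ : n → ℝ | β * (ξ ⬝ᵥ ξ) ≤ ξ ⬝ᵥ M *ᵥ ξ} :=
  isClosed_le (continuous_const.mul (continuous_id.dotProduct continuous_id))
    (continuous_id.dotProduct (continuous_const.matrix_mulVec continuous_id))

theorem MeasureTheory.MemLp.integrable_dotProduct_self {α n : Type*} [Fintype n] [MeasurableSpace α]
    {μ : Measure α} {g : α → n → ℝ} (hg : MemLp g 2 μ) :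
    Integrable (fun x => g x ⬝ᵥ g x) μ := by
  simp only [dotProduct, ← sq]
  exact integrable_finsetSum _ fun i _ => (hg.eval i).integrable_sq

theorem mul_integral_dotProduct_self_le_integral_quadForm {α n : Type*} [Fintype n]
    [MeasurableSpace α] {μ : Measure α} {A : α → Matrix n n ℝ} {β : ℝ}
    (hA : ∀ ξ : n → ℝ, ∀ᵐ x ∂μ, β * (ξ ⬝ᵥ ξ) ≤ ξ ⬝ᵥ A x *ᵥ ξ)
    {g : α → n → ℝ} (hg : MemLp g 2 μ) (hgA : Integrable (fun x => g x ⬝ᵥ A x *ᵥ g x) μ) :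
    β * ∫ x, g x ⬝ᵥ g x ∂μ ≤ ∫ x, g x ⬝ᵥ A x *ᵥ g x ∂μ := by
  have hA_all : ∀ᵐ x ∂μ, ∀ ξ : n → ℝ, β * (ξ ⬝ᵥ ξ) ≤ ξ ⬝ᵥ A x *ᵥ ξ :=
    ae_forall_of_isClosed_setOf (fun x => isClosed_setOf_mul_dotProduct_self_le β (A x)) hA
  rw [← integral_const_mul]
  exact integral_mono_ae (hg.integrable_dotProduct_self.const_mul β) hgA
    (hA_all.mono fun x hx => hx (g x))

theorem mul_integral_sq_le_integral_mul_sq {α : Type*} [MeasurableSpace α] {μ : Measure α}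
    {c u : α → ℝ} {γ : ℝ} (hc : ∀ᵐ x ∂μ, γ ≤ c x) (hu : MemLp u 2 μ)
    (hcu : Integrable (fun x => c x * u x ^ 2) μ) :
    γ * ∫ x, u x ^ 2 ∂μ ≤ ∫ x, c x * u x ^ 2 ∂μ := by
  rw [← integral_const_mul]
  exact integral_mono_ae (hu.integrable_sq.const_mul γ) hcu
    (hc.mono fun x hx => mul_le_mul_of_nonneg_right hx (sq_nonneg _))

theorem garding_inequality_general
    {d : ℕ} (Ω : Set (Fin d → ℝ))
    (A : (Fin d → ℝ) → Matrix (Fin d) (Fin d) ℝ)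
    (β : ℝ)
    (helliptic : ∀ ξ : Fin d → ℝ,
      ∀ᵐ x ∂(volume.restrict Ω), β * (ξ ⬝ᵥ ξ) ≤ ξ ⬝ᵥ (A x).mulVec ξ)
    (c : (Fin d → ℝ) → ℝ)
    (γ : ℝ)
    (hcbelow : ∀ᵐ x ∂(volume.restrict Ω), γ ≤ c x)
    (G : ℝ) (hG : β - γ ≤ G)
    (u : (Fin d → ℝ) → ℝ)
    (huL2 : MemLp u 2 (volume.restrict Ω))
    (hgradL2 : MemLp (fun x => pgrad u x) 2 (volume.restrict Ω))
    (hint1 : Integrable (fun x => pgrad u x ⬝ᵥ (A x).mulVec (pgrad u x)) (volume.restrict Ω))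
    (hint2 : Integrable (fun x => c x * u x ^ 2) (volume.restrict Ω)) :
    (∫ x in Ω, pgrad u x ⬝ᵥ (A x).mulVec (pgrad u x)) + ∫ x in Ω, c x * u x ^ 2 ≥
      β * ((∫ x in Ω, pgrad u x ⬝ᵥ pgrad u x) + ∫ x in Ω, u x ^ 2)
        - G * ∫ x in Ω, u x ^ 2 := by
  have hgrad := mul_integral_dotProduct_self_le_integral_quadForm helliptic hgradL2 hint1
  have hzeroth := mul_integral_sq_le_integral_mul_sq hcbelow huL2 hint2
  have hshift : (β - G) * ∫ x in Ω, u x ^ 2 ≤ γ * ∫ x in Ω, u x ^ 2 :=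
    mul_le_mul_of_nonneg_right (by linarith) (integral_nonneg fun x => sq_nonneg _)
  linarith

/-- Gårding's inequality.  For a bounded open `Ω ⊆ ℝ^d`, a measurable,
symmetric, uniformly elliptic (constant `β > 0`) coefficient matrix `A`, a measurable
coefficient `c` essentially bounded below with essential infimum `γ`, every `G ≥ β − γ`
and every `C¹` function `u` on `Ω` with `u` and `∇u` square-integrable over `Ω`:
`∫_Ω ∇u·A∇u + ∫_Ω c u² ≥ β (∫_Ω |∇u|² + ∫_Ω u²) − G ∫_Ω u²`. -/
theorem garding_inequality
    {d : ℕ} (Ω : Set (Fin d → ℝ)) (hΩopen : IsOpen Ω) (hΩbdd : Bornology.IsBounded Ω)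
    (A : (Fin d → ℝ) → Matrix (Fin d) (Fin d) ℝ) (hAmeas : ∀ i j : Fin d, Measurable fun x => A x i j)
    (hAsymm : ∀ x ∈ Ω, (A x).IsSymm)
    (β : ℝ) (hβ : 0 < β)
    (helliptic : ∀ ξ : Fin d → ℝ,
      ∀ᵐ x ∂(volume.restrict Ω), β * (ξ ⬝ᵥ ξ) ≤ ξ ⬝ᵥ (A x).mulVec ξ)
    (c : (Fin d → ℝ) → ℝ) (hcmeas : Measurable c)
    (γ : ℝ) (hγ : γ = essInf c (volume.restrict Ω))
    (hcbelow : ∀ᵐ x ∂(volume.restrict Ω), γ ≤ c x)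
    (G : ℝ) (hG : β - γ ≤ G)
    (u : (Fin d → ℝ) → ℝ) (hu : ContDiffOn ℝ 1 u Ω)
    (huL2 : MemLp u 2 (volume.restrict Ω))
    (hgradL2 : MemLp (fun x => pgrad u x) 2 (volume.restrict Ω))
    (hint1 : Integrable (fun x => pgrad u x ⬝ᵥ (A x).mulVec (pgrad u x)) (volume.restrict Ω))
    (hint2 : Integrable (fun x => c x * u x ^ 2) (volume.restrict Ω)) :
    (∫ x in Ω, pgrad u x ⬝ᵥ (A x).mulVec (pgrad u x)) + ∫ x in Ω, c x * u x ^ 2 ≥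
      β * ((∫ x in Ω, pgrad u x ⬝ᵥ pgrad u x) + ∫ x in Ω, u x ^ 2)
        - G * ∫ x in Ω, u x ^ 2 :=
  garding_inequality_general Ω A β helliptic c γ hcbelow G hG u huL2 hgradL2 hint1 hint2
end

section
/- Let H₀ be a real Hilbert space with inner product (·,·)₀ and norm ‖·‖₀, let H₁ ⊆ H₀ be a linear subspace equipped with a norm ‖·‖₁ satisfying ‖v‖₀ ≤ C₀‖v‖₁ for all v ∈ H₁, and let a : H₁ × H₁ → ℝ be a bilinear form with |a(u,v)| ≤ c‖u‖₁‖v‖₁ for all u, v ∈ H₁. Let (V_n)_{n∈ℕ} be a nondecreasing family of linear subspaces of H₁ such that for every v ∈ H₁ and every ε > 0 there exists n and χ ∈ V_n with ‖v − χ‖₁ ≤ ε. Assume that for every g ∈ H₀ with ‖g‖₀ = 1 there exists w*_g ∈ H₁ solving the adjoint problem a(v, w*_g) = (g, v)₀ for all v ∈ H₁, and that the set W* = {w*_g : g ∈ H₀, ‖g‖₀ = 1} is precompact in (H₁, ‖·‖₁). Then for every ε > 0 there exists n₀ = n₀(ε) such that for every n ≥ n₀ and every e ∈ H₁ satisfying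 the Galerkin orthogonality a(e, χ) = 0 for all χ ∈ V_n, one has ‖e‖₀ ≤ ε‖e‖₁. -/
open scoped RealInnerProductSpace

/-- Aubin–Nitsche / Schatz–Wang duality argument.  `H₀` is a real Hilbert
space, `H₁` a linear subspace of `H₀` (realized by an injective linear map `j`) carrying
its own norm with `‖j v‖₀ ≤ C₀‖v‖₁`; `a` is a bounded bilinear form on `H₁`; `(V n)` is a
nondecreasing family of subspaces with the density property; every unit-norm datum
`g ∈ H₀` has an adjoint solution `wstar g` with `a(v, wstar g) = (g, j v)₀` for all `v`,
and the set of adjoint solutions is precompact in `H₁`.  Then for every `ε > 0` there is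
`n₀` such that every `e ∈ H₁` with Galerkin orthogonality `a(e, χ) = 0` for all `χ ∈ V n`
(with `n ≥ n₀`) satisfies `‖e‖₀ ≤ ε‖e‖₁`. -/
theorem aubin_nitsche_duality
    {H₀ H₁ : Type*} [NormedAddCommGroup H₀] [InnerProductSpace ℝ H₀]
    [NormedAddCommGroup H₁] [NormedSpace ℝ H₁]
    (j : H₁ →ₗ[ℝ] H₀) (hjinj : Function.Injective j)
    (C₀ : ℝ) (hj : ∀ v : H₁, ‖j v‖ ≤ C₀ * ‖v‖)
    (a : H₁ →ₗ[ℝ] H₁ →ₗ[ℝ] ℝ) (c : ℝ)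
    (hbound : ∀ u v : H₁, |a u v| ≤ c * ‖u‖ * ‖v‖)
    (V : ℕ → Submodule ℝ H₁) (hmono : ∀ n : ℕ, V n ≤ V (n + 1))
    (hdense : ∀ v : H₁, ∀ ε : ℝ, 0 < ε → ∃ n : ℕ, ∃ χ ∈ V n, ‖v - χ‖ ≤ ε)
    (wstar : H₀ → H₁)
    (hadj : ∀ g : H₀, ‖g‖ = 1 → ∀ v : H₁, a v (wstar g) = ⟪g, j v⟫)
    (hWprecompact : TotallyBounded (wstar '' {g : H₀ | ‖g‖ = 1})) :
    ∀ ε : ℝ, 0 < ε → ∃ n₀ : ℕ, ∀ n : ℕ, n₀ ≤ n →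
      ∀ e : H₁, (∀ χ ∈ V n, a e χ = 0) → ‖j e‖ ≤ ε * ‖e‖ := by
  intro ε hε
  set M : ℝ := max c 1 with hM
  have hM1 : (1:ℝ) ≤ M := le_max_right _ _
  have hMpos : 0 < M := lt_of_lt_of_le one_pos hM1
  have hδ : 0 < ε / (2 * M) := by positivity
  set δ := ε / (2 * M) with hδdef
  -- cover W* by finitely many δ-balls
  obtain ⟨t, htfin, htcov⟩ := (Metric.totallyBounded_iff.mp hWprecompact) δ hδ
  -- choose approximations of each point
  choose N χ hχmem hχ using fun y : H₁ => hdense y δ hδ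
  refine ⟨htfin.toFinset.sup N, fun n hn e horth => ?_⟩
  by_cases hje : j e = 0
  · rw [hje, norm_zero]; positivity
  · have hjen : 0 < ‖j e‖ := norm_pos_iff.mpr hje
    set g : H₀ := ‖j e‖⁻¹ • j e with hg
    have hgnorm : ‖g‖ = 1 := by
      rw [hg, norm_smul, norm_inv, norm_norm, inv_mul_cancel₀ (ne_of_gt hjen)]
    have hwmem : wstar g ∈ wstar '' {g : H₀ | ‖g‖ = 1} := ⟨g, hgnorm, rfl⟩
    obtain ⟨y, hyt, hyball⟩ := Set.mem_iUnion₂.mp (htcov hwmem)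
    have hyt' : y ∈ htfin.toFinset := htfin.mem_toFinset.mpr hyt
    have hNy : N y ≤ n := le_trans (Finset.le_sup hyt') hn
    have hχVn : χ y ∈ V n := (monotone_nat_of_le_succ hmono hNy) (hχmem y)
    have horth' : a e (χ y) = 0 := horth _ hχVn
    have key : ‖j e‖ = a e (wstar g - χ y) := by
      have h1 : a e (wstar g) = ⟪g, j e⟫ := hadj g hgnorm e
      have h2 : ⟪g, j e⟫ = ‖j e‖ := by
        rw [hg, real_inner_smul_left, real_inner_self_eq_norm_sq]
        field_simp
      rw [map_sub, horth', sub_zero, h1, h2]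
    have hdist : ‖wstar g - χ y‖ ≤ 2 * δ := by
      have h1 : dist (wstar g) y < δ := Metric.mem_ball.mp hyball
      have h2 : ‖y - χ y‖ ≤ δ := hχ y
      calc ‖wstar g - χ y‖ = ‖(wstar g - y) + (y - χ y)‖ := by rw [sub_add_sub_cancel]
        _ ≤ ‖wstar g - y‖ + ‖y - χ y‖ := norm_add_le _ _
        _ ≤ δ + δ := add_le_add (le_of_lt (by rwa [dist_eq_norm] at h1)) h2
        _ = 2 * δ := by ring
    have hcM : c ≤ M := le_max_left _ _
    have hne : (0:ℝ) ≤ ‖e‖ := norm_nonneg _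
    have hnwc : (0:ℝ) ≤ ‖wstar g - χ y‖ := norm_nonneg _
    calc ‖j e‖ = a e (wstar g - χ y) := key
      _ ≤ |a e (wstar g - χ y)| := le_abs_self _
      _ ≤ c * ‖e‖ * ‖wstar g - χ y‖ := hbound _ _
      _ ≤ M * ‖e‖ * (2 * δ) := by
          have h1 : c * ‖e‖ * ‖wstar g - χ y‖ ≤ M * ‖e‖ * ‖wstar g - χ y‖ :=
            mul_le_mul_of_nonneg_right (mul_le_mul_of_nonneg_right hcM hne) hnwc
          have h2 : M * ‖e‖ * ‖wstar g - χ y‖ ≤ M * ‖e‖ * (2 * δ) :=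
            mul_le_mul_of_nonneg_left hdist (mul_nonneg hMpos.le hne)
          linarith
      _ = ε * ‖e‖ := by rw [hδdef]; field_simp
end

section
/- Let H₁ be a real vector space equipped with two norms ‖·‖₀ and ‖·‖₁, let a : H₁ × H₁ → ℝ be a bilinear form that is bounded, |a(u,v)| ≤ c‖u‖₁‖v‖₁ for all u, v ∈ H₁, and satisfies the Gårding inequality a(e,e) ≥ β‖e‖₁² − G‖e‖₀² for all e ∈ H₁, with β > 0, G ≥ 0. Let V ⊆ H₁ be a linear subspace and let u, u_Θ ∈ H₁ with u_Θ ∈ V satisfy the Galerkin orthogonality a(u − u_Θ, χ) = 0 for all χ ∈ V. If ‖u − u_Θ‖₀² ≤ ε‖u − u_Θ‖₁² for some ε > 0 with Gε < β, then ‖u − u_Θ‖₁ ≤ (c/(β − Gε)) ‖u − χ‖₁ for every χ ∈ V; in particular ‖u − u_Θ‖₁ ≤ (c/(β − Gε)) inf_{χ∈V} ‖u − χ‖₁. -/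
/-- Quasi-optimality of the Galerkin solution for a bounded bilinear form
satisfying a Gårding inequality, given Galerkin orthogonality and the duality estimate
`‖u − u_Θ‖₀² ≤ ε‖u − u_Θ‖₁²` with `Gε < β`. -/
theorem galerkin_quasi_optimality
    {H₁ : Type*} [AddCommGroup H₁] [Module ℝ H₁]
    (n₀ n₁ : Seminorm ℝ H₁) (a : H₁ →ₗ[ℝ] H₁ →ₗ[ℝ] ℝ)
    (c β G ε : ℝ) (hβ : 0 < β) (hG : 0 ≤ G)
    (hbound : ∀ u v : H₁, |a u v| ≤ c * n₁ u * n₁ v)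
    (hgarding : ∀ e : H₁, β * (n₁ e) ^ 2 - G * (n₀ e) ^ 2 ≤ a e e)
    (V : Submodule ℝ H₁) (u uΘ : H₁) (huΘ : uΘ ∈ V)
    (horth : ∀ χ ∈ V, a (u - uΘ) χ = 0)
    (hε : 0 < ε) (hGε : G * ε < β)
    (he : (n₀ (u - uΘ)) ^ 2 ≤ ε * (n₁ (u - uΘ)) ^ 2) :
    (∀ χ ∈ V, n₁ (u - uΘ) ≤ (c / (β - G * ε)) * n₁ (u - χ)) ∧
      n₁ (u - uΘ) ≤ (c / (β - G * ε)) * sInf {s : ℝ | ∃ χ ∈ V, s = n₁ (u - χ)} := by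
  set e := u - uΘ with hedef
  have hβGε : 0 < β - G * ε := by linarith
  have hpart1 : ∀ χ ∈ V, n₁ e ≤ (c / (β - G * ε)) * n₁ (u - χ) := by
    intro χ hχ
    -- key inequality
    have horth' : a e (χ - uΘ) = 0 := horth _ (V.sub_mem hχ huΘ)
    have haee : a e e = a e (u - χ) := by
      have h : (a e) (u - χ) = (a e) e - (a e) (χ - uΘ) := by
        rw [← map_sub]; congr 1; rw [hedef]; abel
      rw [h, horth', sub_zero]
    have key : (β - G * ε) * (n₁ e) ^ 2 ≤ c * n₁ e * n₁ (u - χ) := by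
      have h1 : β * (n₁ e) ^ 2 - G * (n₀ e) ^ 2 ≤ a e e := hgarding e
      have h2 : G * (n₀ e) ^ 2 ≤ G * (ε * (n₁ e) ^ 2) :=
        mul_le_mul_of_nonneg_left he hG
      have h3 : a e e ≤ c * n₁ e * n₁ (u - χ) := by
        rw [haee]
        exact le_trans (le_abs_self _) (hbound _ _)
      nlinarith
    rcases eq_or_lt_of_le (apply_nonneg n₁ e) with h0 | h0
    · rw [← h0]
      rcases eq_or_lt_of_le (apply_nonneg n₁ (u - χ)) with h1 | h1
      · rw [← h1]; simp
      · have hc : 0 ≤ c := by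
          nlinarith [hbound (u - χ) (u - χ), abs_nonneg ((a (u - χ)) (u - χ)),
            mul_pos h1 h1]
        positivity
    · have : (β - G * ε) * n₁ e ≤ c * n₁ (u - χ) := by
        have := key
        nlinarith
      rw [div_mul_eq_mul_div, le_div_iff₀ hβGε]
      linarith
  refine ⟨hpart1, ?_⟩
  set S : Set ℝ := {s : ℝ | ∃ χ ∈ V, s = n₁ (u - χ)} with hS
  have hne : S.Nonempty := ⟨n₁ (u - uΘ), uΘ, huΘ, rfl⟩
  have hSub : ∀ s ∈ S, n₁ e ≤ (c / (β - G * ε)) * s := by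
    rintro s ⟨χ, hχ, rfl⟩
    exact hpart1 χ hχ
  set k := c / (β - G * ε) with hk
  rcases le_or_gt k 0 with hk0 | hk0
  · have he0 : n₁ e = 0 := by
      have h := hpart1 uΘ huΘ
      have : k * n₁ (u - uΘ) ≤ 0 := mul_nonpos_of_nonpos_of_nonneg hk0 (apply_nonneg _ _)
      have := apply_nonneg n₁ e
      rw [← hedef] at h
      linarith
    have hS0 : sInf S = 0 := by
      have h1 : sInf S ≤ 0 := by
        have : (0 : ℝ) ∈ S := ⟨uΘ, huΘ, by rw [← hedef, he0]⟩
        exact csInf_le ⟨0, fun s ⟨χ, _, hs⟩ => hs ▸ apply_nonneg n₁ _⟩ this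
      have h2 : 0 ≤ sInf S := le_csInf hne (fun s ⟨χ, _, hs⟩ => hs ▸ apply_nonneg n₁ _)
      linarith
    rw [hS0, mul_zero, he0]
  · have hlb : n₁ e / k ≤ sInf S := by
      apply le_csInf hne
      intro s hs
      rw [div_le_iff₀ hk0, mul_comm]
      exact hSub s hs
    rw [div_le_iff₀ hk0, mul_comm] at hlb
    exact hlb
end
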